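/- For every positive integer r and every real x with −π ≤ x ≤ π, ∑_{n=1}^∞ (−1)^{n−1} sin(nx)/n^{2r+1} = ∑_{k=1}^{r} (−1)^{k−1} x^{2k−1} η(2r+2−2k)/(2k−1)! + (−1)^r x^{2r+1}/(2·(2r+1)!). -/

import Mathlib

/-!
Put `t = 1/2 + x/(2π) ∈ [0, 1]` in the Fourier series of the odd Bernoulli polynomial
`B_{2r+1}(t) ∝ ∑ sin(2πnt)/n^{2r+1}`: since `sin(2πnt) = (-1)^n sin(nx)`, the alternating sine
series is a multiple of `B_{2r+1}(1/2 + x/(2π))`. Expanding this polynomial around `1/2` by the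
addition theorem, the odd values `B_{2k+1}(1/2)` vanish, and the cosine series at `t = 1/2`
identifies each even value `B_{2m}(1/2)`, suitably normalised, with `η(2m)`.
-/

open Real

/-- The Dirichlet eta function at natural arguments, as a real series. -/
noncomputable def etaR (s : ℕ) : ℝ := ∑' n : ℕ, (-1 : ℝ) ^ n / (n + 1 : ℝ) ^ s

open Finset
open scoped Nat

theorem Nat.choose_mul_choose_sub_comm (n k i : ℕ) :
    n.choose k * (n - k).choose i = n.choose i * (n - i).choose k := by
  rcases le_or_gt (k + i) n with h | h
  · have hk := Nat.choose_mul (n := n) (Nat.le_add_right k i)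
    have hi := Nat.choose_mul (n := n) (Nat.le_add_left i k)
    rw [Nat.add_sub_cancel_left] at hk
    rw [Nat.add_sub_cancel] at hi
    rw [← hk, ← hi, Nat.choose_symm_add]
  · have vanish : ∀ a b, n < a + b → n.choose a * (n - a).choose b = 0 := fun a b hab => by
      rcases le_or_gt a n with ha | ha
      · rw [Nat.choose_eq_zero_of_lt (by omega : n - a < b), mul_zero]
      · rw [Nat.choose_eq_zero_of_lt ha, zero_mul]
    rw [vanish k i h, vanish i k (by omega)]

theorem Finset.sum_range_two_mul {M : Type*} [AddCommMonoid M] (f : ℕ → M) (n : ℕ) :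
    ∑ k ∈ range (2 * n), f k = ∑ i ∈ range n, (f (2 * i) + f (2 * i + 1)) := by
  induction n with
  | zero => simp
  | succ n ih =>
    rw [mul_add, mul_one, sum_range_succ, sum_range_succ, sum_range_succ, ih, add_assoc]

theorem bernoulliFun_eq_sum (n : ℕ) (x : ℝ) :
    bernoulliFun n x = ∑ k ∈ range (n + 1), (n.choose k : ℝ) * bernoulli k * x ^ (n - k) := by
  simp only [bernoulliFun, Polynomial.bernoulli, Polynomial.map_sum, Polynomial.eval_finsetSum,
    Polynomial.map_monomial, Polynomial.eval_monomial, eq_ratCast, Rat.cast_mul, Rat.cast_natCast]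
  exact sum_congr rfl fun k _ => by ring

theorem bernoulliFun_add (n : ℕ) (s t : ℝ) :
    bernoulliFun n (s + t)
      = ∑ i ∈ range (n + 1), (n.choose i : ℝ) * bernoulliFun (n - i) s * t ^ i := by
  simp only [bernoulliFun_eq_sum, add_comm s t, add_pow t s, mul_sum, sum_mul]
  rw [sum_comm' (t' := range (n + 1)) (s' := fun i => range (n - i + 1))]
  · refine sum_congr rfl fun i _ => sum_congr rfl fun k _ => ?_
    have hchoose : (n.choose k : ℝ) * (n - k).choose i = n.choose i * (n - i).choose k := by
      exact_mod_cast Nat.choose_mul_choose_sub_comm n k i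
    rw [Nat.sub_right_comm]
    linear_combination bernoulli k * t ^ i * s ^ (n - i - k) * hchoose
  · intro k i
    simp only [mem_range]
    omega

theorem bernoulliFun_two_mul_add_one_eval_half_add (r : ℕ) (y : ℝ) :
    bernoulliFun (2 * r + 1) (2⁻¹ + y)
      = ∑ j ∈ range (r + 1), ((2 * r + 1).choose (2 * j + 1) : ℝ) * bernoulliFun (2 * (r - j)) 2⁻¹
          * y ^ (2 * j + 1) := by
  rw [bernoulliFun_add, show 2 * r + 1 + 1 = 2 * (r + 1) by ring, sum_range_two_mul]
  refine sum_congr rfl fun j hj => ?_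
  rw [mem_range] at hj
  rw [show 2 * r + 1 - 2 * j = 2 * (r - j) + 1 by omega, bernoulliFun_eval_half_eq_zero,
    show 2 * r + 1 - (2 * j + 1) = 2 * (r - j) by omega]
  ring

/-- Euler's closed form of `η(2m)`. At `m = 0` it gives `η(0) = 1/2`, the value of the analytic
continuation, and this is where the last term of the expansion comes from. -/
noncomputable def etaEvenValue (m : ℕ) : ℝ :=
  (-1) ^ m * (2 * π) ^ (2 * m) / 2 / (2 * m)! * bernoulliFun (2 * m) 2⁻¹

theorem etaEvenValue_zero : etaEvenValue 0 = 2⁻¹ := by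
  simp [etaEvenValue]

theorem HasSum.neg_comp_succ_of_apply_zero {f : ℕ → ℝ} {a : ℝ} (hf : HasSum f a) (h0 : f 0 = 0) :
    HasSum (fun n => -f (n + 1)) (-a) := by
  have h := (hasSum_nat_add_iff' (f := f) 1).mpr hf
  rw [sum_range_one, h0, sub_zero] at h
  exact h.neg

theorem hasSum_etaEvenValue {m : ℕ} (hm : m ≠ 0) :
    HasSum (fun n : ℕ => (-1 : ℝ) ^ n / (n + 1 : ℝ) ^ (2 * m)) (etaEvenValue m) := by
  have h := (hasSum_one_div_nat_pow_mul_cos hm (x := 2⁻¹) ⟨by norm_num, by norm_num⟩)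
    |>.neg_comp_succ_of_apply_zero (by simp [hm])
  convert h using 1
  · ext n
    rw [show 2 * π * ((n + 1 : ℕ) : ℝ) * 2⁻¹ = ((n + 1 : ℕ) : ℝ) * π by ring, cos_nat_mul_pi]
    push_cast
    ring
  · rw [etaEvenValue, bernoulliFun, pow_succ]
    ring

theorem etaR_two_mul {m : ℕ} (hm : m ≠ 0) : etaR (2 * m) = etaEvenValue m :=
  (hasSum_etaEvenValue hm).tsum_eq

theorem hasSum_neg_one_pow_mul_sin_div_succ_pow {r : ℕ} (hr : r ≠ 0) {x : ℝ}
    (hx : x ∈ Set.Icc (-π) π) :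
    HasSum (fun n : ℕ => (-1 : ℝ) ^ n * sin ((n + 1 : ℝ) * x) / (n + 1 : ℝ) ^ (2 * r + 1))
      ((-1) ^ r * (2 * π) ^ (2 * r + 1) / 2 / (2 * r + 1)! *
        bernoulliFun (2 * r + 1) (2⁻¹ + x / (2 * π))) := by
  have ht : 2⁻¹ + x / (2 * π) ∈ Set.Icc (0 : ℝ) 1 := by
    have h2π : 0 < 2 * π := by positivity
    have hlow : -2⁻¹ ≤ x / (2 * π) := by rw [le_div_iff₀ h2π]; linarith [hx.1]
    have hupp : x / (2 * π) ≤ 2⁻¹ := by rw [div_le_iff₀ h2π]; linarith [hx.2]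
    constructor <;> linarith
  have h := (hasSum_one_div_nat_pow_mul_sin hr ht).neg_comp_succ_of_apply_zero (by simp)
  convert h using 1
  · ext n
    rw [show 2 * π * ((n + 1 : ℕ) : ℝ) * (2⁻¹ + x / (2 * π))
        = ((n + 1 : ℕ) : ℝ) * x + ((n + 1 : ℕ) : ℝ) * π by field_simp; ring, sin_add_nat_mul_pi]
    push_cast
    ring
  · rw [bernoulliFun, pow_succ]
    ring

theorem mul_bernoulliFun_two_mul_add_one_eq_sum_etaEvenValue (r : ℕ) (x : ℝ) :
    (-1) ^ r * (2 * π) ^ (2 * r + 1) / 2 / (2 * r + 1)! *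
        bernoulliFun (2 * r + 1) (2⁻¹ + x / (2 * π))
      = ∑ j ∈ range (r + 1), (-1) ^ j * x ^ (2 * j + 1) / (2 * j + 1)! * etaEvenValue (r - j) := by
  rw [bernoulliFun_two_mul_add_one_eval_half_add, mul_sum]
  refine sum_congr rfl fun j hj => ?_
  obtain ⟨m, rfl⟩ := Nat.exists_eq_add_of_le (Nat.lt_succ_iff.mp (mem_range.mp hj))
  have hfact : ((2 * (j + m) + 1).choose (2 * j + 1) : ℝ) * (2 * m)! * (2 * j + 1)!
      = (2 * (j + m) + 1)! := by
    rw [show 2 * (j + m) + 1 = 2 * m + (2 * j + 1) by ring]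
    exact_mod_cast Nat.add_choose_mul_factorial_mul_factorial _ _
  have hchoose : ((2 * (j + m) + 1).choose (2 * j + 1) : ℝ) ≠ 0 :=
    Nat.cast_ne_zero.mpr (Nat.choose_pos (by omega)).ne'
  rw [Nat.add_sub_cancel_left, etaEvenValue, ← hfact, div_pow]
  field_simp [pi_ne_zero, hchoose]
  ring

theorem stmt_9 (r : ℕ) (hr : 0 < r) (x : ℝ) (hx0 : -π ≤ x) (hx : x ≤ π) :
    HasSum (fun n : ℕ => (-1 : ℝ) ^ n * Real.sin ((n + 1 : ℝ) * x) / (n + 1 : ℝ) ^ (2 * r + 1))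
      ((∑ k ∈ Finset.Icc 1 r,
          (-1 : ℝ) ^ (k - 1) * x ^ (2 * k - 1) * etaR (2 * r + 2 - 2 * k) /
            (Nat.factorial (2 * k - 1)))
        + (-1 : ℝ) ^ r * x ^ (2 * r + 1) / (2 * (Nat.factorial (2 * r + 1)))) := by
  convert hasSum_neg_one_pow_mul_sin_div_succ_pow hr.ne' ⟨hx0, hx⟩ using 1
  rw [mul_bernoulliFun_two_mul_add_one_eq_sum_etaEvenValue, sum_range_succ, Nat.sub_self,
    etaEvenValue_zero, ← Ico_add_one_right_eq_Icc, sum_Ico_eq_sum_range, Nat.add_sub_cancel]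
  congr 1
  · refine sum_congr rfl fun j hj => ?_
    have hjr : j < r := mem_range.mp hj
    rw [show 1 + j - 1 = j by omega, show 2 * (1 + j) - 1 = 2 * j + 1 by omega,
      show 2 * r + 2 - 2 * (1 + j) = 2 * (r - j) by omega, etaR_two_mul (by omega)]
    ring
  · ring
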